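/- Let C be an abelian category, X an object, and A a full subcategory closed under extensions and under kernels of epimorphisms between its objects. Let E be the full subcategory of the over-category C/X spanned by epimorphisms p : A ⟶ X with A ∈ A. If E is nonempty, then E is a connected category. -/

import Mathlib

open CategoryTheory CategoryTheory.Limits

/-!
Any two objects `p : P ⟶ X` and `q : Q ⟶ X` of `E` both map to `[p, q] : P ⊞ Q ⟶ X`,
which is again in `E`: it is epi because `p` is, and `P ⊞ Q` lies in `A` as a split extension
of `Q` by `P`. So any two objects of the nonempty category `E` are joined by a zigzag.
-/

lemma CategoryTheory.isConnected_of_exists_cospan {J : Type*} [Category J] [Nonempty J]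
    (h : ∀ j k : J, ∃ r, Nonempty (j ⟶ r) ∧ Nonempty (k ⟶ r)) : IsConnected J :=
  zigzag_isConnected fun j k => by
    obtain ⟨r, ⟨f⟩, ⟨g⟩⟩ := h j k
    exact Zigzag.of_hom_inv f g

lemma biprod_mem_of_closedUnderExtensions {C : Type*} [Category C] [Preadditive C]
    [HasZeroObject C] [HasBinaryBiproducts C] (A : Set C)
    (hext : ∀ S : ShortComplex C, S.ShortExact → S.X₁ ∈ A → S.X₃ ∈ A → S.X₂ ∈ A)
    {P Q : C} (hP : P ∈ A) (hQ : Q ∈ A) : (P ⊞ Q : C) ∈ A :=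
  hext _ (ShortComplex.Splitting.ofHasBinaryBiproduct P Q).shortExact hP hQ

lemma exists_cospan_of_epi_of_mem {C : Type*} [Category C] [Preadditive C] [HasZeroObject C]
    [HasBinaryBiproducts C] (A : Set C)
    (hext : ∀ S : ShortComplex C, S.ShortExact → S.X₁ ∈ A → S.X₃ ∈ A → S.X₂ ∈ A) {X : C}
    (p q : ObjectProperty.FullSubcategory (fun p : Over X => Epi p.hom ∧ p.left ∈ A)) :
    ∃ r, Nonempty (p ⟶ r) ∧ Nonempty (q ⟶ r) := by
  obtain ⟨hp, hpA⟩ := p.property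
  let r : ObjectProperty.FullSubcategory (fun p : Over X => Epi p.hom ∧ p.left ∈ A) :=
    ⟨Over.mk (biprod.desc p.obj.hom q.obj.hom), biprod.epi_desc_of_epi_left _ _,
      biprod_mem_of_closedUnderExtensions A hext hpA q.property.2⟩
  exact ⟨r, ⟨ObjectProperty.homMk (Over.homMk biprod.inl (by simp [r]))⟩,
    ⟨ObjectProperty.homMk (Over.homMk biprod.inr (by simp [r]))⟩⟩

theorem isConnected_epis_from_resolving_general {C : Type*} [Category C] [Abelian C] (A : Set C)
    (hext : ∀ S : ShortComplex C, S.ShortExact → S.X₁ ∈ A → S.X₃ ∈ A → S.X₂ ∈ A)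
    (X : C)
    [Nonempty (ObjectProperty.FullSubcategory (fun p : Over X => Epi p.hom ∧ p.left ∈ A))] :
    IsConnected (ObjectProperty.FullSubcategory (fun p : Over X => Epi p.hom ∧ p.left ∈ A)) :=
  isConnected_of_exists_cospan (exists_cospan_of_epi_of_mem A hext)

/-- Let `C` be an abelian category, `X` an object, and `A` a class of objects closed under
extensions and under kernels of epimorphisms between its objects.  Let `E` be the full
subcategory of the over-category `C/X` spanned by epimorphisms `p : A ⟶ X` with `A ∈ A`.
If `E` is nonempty, then `E` is connected. -/
theorem isConnected_epis_from_resolving {C : Type*} [Category C] [Abelian C] (A : Set C)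
    (hext : ∀ S : ShortComplex C, S.ShortExact → S.X₁ ∈ A → S.X₃ ∈ A → S.X₂ ∈ A)
    (hker : ∀ S : ShortComplex C, S.ShortExact → S.X₂ ∈ A → S.X₃ ∈ A → S.X₁ ∈ A)
    (X : C)
    [Nonempty (ObjectProperty.FullSubcategory (fun p : Over X => Epi p.hom ∧ p.left ∈ A))] :
    IsConnected (ObjectProperty.FullSubcategory (fun p : Over X => Epi p.hom ∧ p.left ∈ A)) :=
  isConnected_epis_from_resolving_general A hext X
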